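/- arXiv:0709.4518 — 3 statements merged into one kernel-verified Lean document; each statement's English description precedes it below -/
import Mathlib

section
/- Let Γ be a simplicial complex on [n] and 1 ≤ i < j ≤ n. The following are equivalent: (i) Γ satisfies the Link condition with respect to {i,j}; (ii) Shift_{ij}(Γ) = C_Γ(ij) ∪ { {i} ∪ F : F ∈ {j} * lk_Γ({i,j}) }; (iii) the Stanley–Reisner ideal I_Γ has no minimal monomial generator divisible by x_i x_j. In particular, if Γ satisfies the Link condition with respect to {i,j}, then Shift_{ij}(Γ) also satisfies the Link condition with respect to {i,j}. -/
/-! Combinatorics of simplicial complexes on subsets of ℕ (vertex set `[n] = Finset.Icc 1 n`). -/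

/-- `Γ` is a simplicial complex on the vertex set `V`. -/
def SimplicialComplexOn (V : Finset ℕ) (Γ : Set (Finset ℕ)) : Prop :=
  (∀ F ∈ Γ, F ⊆ V) ∧ (∀ v ∈ V, ({v} : Finset ℕ) ∈ Γ) ∧
    (∀ F ∈ Γ, ∀ G, G ⊆ F → G ∈ Γ)

/-- The dimension of a simplicial complex, as an integer (`dim Γ = max {|F| - 1 : F ∈ Γ}`). -/
noncomputable def sdim (Γ : Set (Finset ℕ)) : ℤ :=
  sSup ((fun F : Finset ℕ => (F.card : ℤ) - 1) '' Γ)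

/-- A facet of `Γ` is a maximal face. -/
def IsFacet (Γ : Set (Finset ℕ)) (F : Finset ℕ) : Prop :=
  F ∈ Γ ∧ ∀ G ∈ Γ, F ⊆ G → F = G

/-- A complex is pure if all of its facets have the same cardinality. -/
def PureComplex (Γ : Set (Finset ℕ)) : Prop :=
  ∀ F G, IsFacet Γ F → IsFacet Γ G → F.card = G.card

/-- `fvec Γ k` is the number of faces of `Γ` of cardinality `k`, i.e. `f_{k-1}(Γ)`. -/
noncomputable def fvec (Γ : Set (Finset ℕ)) (k : ℕ) : ℕ :=
  {F ∈ Γ | F.card = k}.ncard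

/-- The `h`-vector of a `(d-1)`-dimensional complex:
`h_i = ∑_{j=0}^i (-1)^{i-j} binom(d-j, d-i) f_{j-1}`. -/
noncomputable def hvec (d : ℕ) (Γ : Set (Finset ℕ)) (i : ℕ) : ℤ :=
  ∑ j ∈ Finset.range (i + 1),
    (-1 : ℤ) ^ (i - j) * (Nat.choose (d - j) (d - i) : ℤ) * (fvec Γ j : ℤ)

/-- The link of `Γ` with respect to a face `F`. -/
def linkOf (Γ : Set (Finset ℕ)) (F : Finset ℕ) : Set (Finset ℕ) :=
  {G | Disjoint G F ∧ G ∪ F ∈ Γ}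

/-- The contraction of `Γ` with respect to `{i,j}`, identifying vertex `i` with `j`. -/
def contraction (Γ : Set (Finset ℕ)) (i j : ℕ) : Set (Finset ℕ) :=
  {F | F ∈ Γ ∧ i ∉ F} ∪ {G | ∃ F ∈ Γ, i ∈ F ∧ G = F.erase i ∪ {j}}

/-- The Link condition: `lk_Γ({i}) ∩ lk_Γ({j}) = lk_Γ({i,j})`. -/
def LinkCondition (Γ : Set (Finset ℕ)) (i j : ℕ) : Prop :=
  linkOf Γ {i} ∩ linkOf Γ {j} = linkOf Γ {i, j}

open Classical in
/-- The shift operator `C_{ij}` on faces. -/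
noncomputable def shiftMap (Γ : Set (Finset ℕ)) (i j : ℕ) (F : Finset ℕ) : Finset ℕ :=
  if i ∈ F ∧ j ∉ F ∧ F.erase i ∪ {j} ∉ Γ then F.erase i ∪ {j} else F

/-- `Shift_{ij}(Γ) = {C_{ij}(F) : F ∈ Γ}`. -/
noncomputable def shiftComplex (Γ : Set (Finset ℕ)) (i j : ℕ) : Set (Finset ℕ) :=
  (shiftMap Γ i j) '' Γ

/-- The join `W * Σ = {F ∪ G : F ⊆ W, G ∈ Σ}` of a vertex set with a complex. -/
def joinW (W : Finset ℕ) (C : Set (Finset ℕ)) : Set (Finset ℕ) :=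
  {H | ∃ F ⊆ W, ∃ G ∈ C, H = F ∪ G}

/-- Strong edge decomposability: boundaries of simplices and `{∅}` are strongly edge
decomposable, and recursively, a pure complex satisfying the Link condition w.r.t. an edge
`{i,j}` whose contraction and link are strongly edge decomposable is
strongly edge decomposable. -/
inductive StronglyEdgeDecomposable : Set (Finset ℕ) → Prop
  | trivialComplex : StronglyEdgeDecomposable {(∅ : Finset ℕ)}
  | simplexBoundary (V : Finset ℕ) (hV : V.Nonempty) :
      StronglyEdgeDecomposable {F | F ⊆ V ∧ F ≠ V}
  | contract (Γ : Set (Finset ℕ)) (i j : ℕ) (hij : i < j)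
      (hpure : PureComplex Γ) (hedge : ({i, j} : Finset ℕ) ∈ Γ)
      (hlc : LinkCondition Γ i j)
      (hcon : StronglyEdgeDecomposable (contraction Γ i j))
      (hlk : StronglyEdgeDecomposable (linkOf Γ {i, j})) :
      StronglyEdgeDecomposable Γ

/-- A shifted complex: `F ∈ Γ`, `i ∈ F`, `i < j`, `j ∈ V` imply `(F \ {i}) ∪ {j} ∈ Γ`. -/
def ShiftedComplex (V : Finset ℕ) (Γ : Set (Finset ℕ)) : Prop :=
  ∀ F ∈ Γ, ∀ i ∈ F, ∀ j, i < j → j ∈ V → insert j (F.erase i) ∈ Γ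

/-- A `d`-subset `F ⊆ [n]` is admissible if `n - k ∉ F` implies `[n-d+k, n-k-1] ⊆ F`. -/
def Admissible (n d : ℕ) (F : Finset ℕ) : Prop :=
  F ⊆ Finset.Icc 1 n ∧ F.card = d ∧
    ∀ k < n, (n - k) ∉ F → Finset.Icc (n - d + k) (n - k - 1) ⊆ F

/-- `Δ(n,d)`, the complex generated by all admissible `d`-subsets of `[n]`; by a theorem of
Kalai this is the symmetric algebraic shifted complex `Δˢ(C(n,d))` of the boundary complex of
the cyclic `d`-polytope with `n` vertices. -/
def DeltaC (n d : ℕ) : Set (Finset ℕ) :=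
  if d = 0 then {(∅ : Finset ℕ)} else {G | ∃ F, Admissible n d F ∧ G ⊆ F}

/-- The increasing enumeration of `V`, as a map `{1, …, |V|} → V ⊆ ℕ` (identity elsewhere). -/
noncomputable def vlabel (V : Finset ℕ) (i : ℕ) : ℕ :=
  if h : i - 1 < V.card then (((V.orderIsoOfFin rfl) ⟨i - 1, h⟩ : V) : ℕ) else i

/-- `Δ(V,d)`: the complex `Δ(|V|,d)` relabeled order-isomorphically onto the vertex set `V`. -/
noncomputable def DeltaV (V : Finset ℕ) (d : ℕ) : Set (Finset ℕ) :=
  (fun G : Finset ℕ => G.image (vlabel V)) '' DeltaC V.card d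
/-! Squeezed balls and spheres (Kalai). Monomials on `[m]` are represented as multisets. -/

/-- `U` is a shifted order ideal of monomials on `[m]`: it contains `1` and all variables
`x_1,…,x_m`, is closed under divisibility, and `u·x_i ∈ U`, `i < j ≤ m` imply `u·x_j ∈ U`.
(A monomial is encoded as the multiset of its variable indices.) -/
def IsShiftedOrderIdeal (m : ℕ) (U : Set (Multiset ℕ)) : Prop :=
  (∀ u ∈ U, ∀ i ∈ u, i ∈ Finset.Icc 1 m) ∧ (0 : Multiset ℕ) ∈ U ∧
    (∀ i ∈ Finset.Icc 1 m, ({i} : Multiset ℕ) ∈ U) ∧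
    (∀ u ∈ U, ∀ v, v ≤ u → v ∈ U) ∧
    (∀ u : Multiset ℕ, ∀ i j : ℕ, i < j → j ≤ m → (i ::ₘ u) ∈ U → (j ::ₘ u) ∈ U)

/-- For a monomial `u = x_{i_1}⋯x_{i_k}` (`i_1 ≤ … ≤ i_k`), the `(d+1)`-set
`F_d(u) = {i_1, i_1+1} ∪ {i_2+2, i_2+3} ∪ ⋯ ∪ {i_k+2(k-1), i_k+2k-1} ∪ [n+2k-d, n]`. -/
noncomputable def Fd (n d : ℕ) (u : Multiset ℕ) : Finset ℕ :=
  (Finset.range (Multiset.card u)).biUnion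
      (fun j => {(u.sort (· ≤ ·)).getD j 0 + 2 * j, (u.sort (· ≤ ·)).getD j 0 + 2 * j + 1}) ∪
    Finset.Icc (n + 2 * Multiset.card u - d) n

/-- The squeezed `d`-ball `B_d(U)`: the complex generated by `{F_d(u) : u ∈ U}`. -/
def squeezedBall (n d : ℕ) (U : Set (Multiset ℕ)) : Set (Finset ℕ) :=
  {G | ∃ u ∈ U, G ⊆ Fd n d u}

/-- The boundary of a pure `d`-dimensional complex `B`: the subcomplex generated by the
`(d-1)`-dimensional faces (cardinality-`d` faces) contained in exactly one facet. -/
noncomputable def complexBoundary (d : ℕ) (B : Set (Finset ℕ)) : Set (Finset ℕ) :=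
  {F | ∃ G, F ⊆ G ∧ G ∈ B ∧ G.card = d ∧
    {H | H ∈ B ∧ H.card = d + 1 ∧ G ⊆ H}.ncard = 1}

/-- The squeezed `(d-1)`-sphere `S_d(U) = ∂ B_d(U)`. -/
noncomputable def squeezedSphere (n d : ℕ) (U : Set (Multiset ℕ)) : Set (Finset ℕ) :=
  complexBoundary d (squeezedBall n d U)

/-! The Stanley–Reisner ideal, the degree reverse lexicographic order, initial ideals and
generic initial ideals in the polynomial ring `K[x_1,…,x_n]`, realized as
`MvPolynomial (Fin n) K` with the variable `x_i` being `X ⟨i-1⟩`. -/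

/-- The squarefree monomial `x_F = ∏_{i ∈ F} x_i` (variable `x_i`, `1 ≤ i ≤ n`, is `X ⟨i-1⟩`). -/
noncomputable def faceMonomial (K : Type*) [CommRing K] (n : ℕ) (F : Finset ℕ) :
    MvPolynomial (Fin n) K :=
  ∏ a ∈ Finset.univ.filter (fun a : Fin n => (a : ℕ) + 1 ∈ F), MvPolynomial.X a

/-- The Stanley–Reisner ideal of a complex `Γ` on `[n]`, generated by the squarefree
monomials `x_F` with `F ⊆ [n]`, `F ∉ Γ`. -/
noncomputable def srIdeal (K : Type*) [CommRing K] (n : ℕ) (Γ : Set (Finset ℕ)) :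
    Ideal (MvPolynomial (Fin n) K) :=
  Ideal.span {f | ∃ F : Finset ℕ, F ⊆ Finset.Icc 1 n ∧ F ∉ Γ ∧ f = faceMonomial K n F}

/-- The degree reverse lexicographic order (induced by `x_1 > x_2 > ⋯`, smaller index =
bigger variable): `u < v` iff `deg u < deg v`, or degrees agree and at the largest index
where `u, v` differ, `u` has the larger exponent. -/
def DegRevLexLT {σ : Type*} [LinearOrder σ] (u v : σ →₀ ℕ) : Prop :=
  (u.sum fun _ e => e) < (v.sum fun _ e => e) ∨
    ((u.sum fun _ e => e) = (v.sum fun _ e => e) ∧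
      ∃ k, v k < u k ∧ ∀ l, k < l → u l = v l)

/-- The initial ideal of `I` w.r.t. the degree reverse lexicographic order: the ideal
spanned by the leading monomials of the elements of `I`. -/
noncomputable def initialIdeal {σ : Type*} [LinearOrder σ] {K : Type*} [Field K]
    (I : Ideal (MvPolynomial σ K)) : Ideal (MvPolynomial σ K) :=
  Ideal.span {m | ∃ f ∈ I, ∃ u ∈ f.support, m = MvPolynomial.monomial u (1 : K) ∧
    ∀ v ∈ f.support, v ≠ u → DegRevLexLT v u}

/-- The linear change of coordinates of `K[x_1,…,x_n]` associated with a matrix `M`,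
`x_j ↦ ∑_i M_{ij} x_i`. -/
noncomputable def genLin {K : Type*} [CommRing K] {n : ℕ} (M : Matrix (Fin n) (Fin n) K) :
    MvPolynomial (Fin n) K →ₐ[K] MvPolynomial (Fin n) K :=
  MvPolynomial.aeval (fun j => ∑ a : Fin n, MvPolynomial.C (M a j) * MvPolynomial.X a)

/-- `J` is the generic initial ideal (w.r.t. degrevlex) of `I`: there is a nonempty Zariski
open subset `U ⊆ GL_n(K)` (the nonvanishing locus of a nonzero polynomial in the matrix
entries) such that `in(φ(I)) = J` for every `φ ∈ U`. -/
def IsGin {K : Type*} [Field K] {n : ℕ} (I J : Ideal (MvPolynomial (Fin n) K)) : Prop :=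
  ∃ p : MvPolynomial (Fin n × Fin n) K, p ≠ 0 ∧
    ∀ M : Matrix (Fin n) (Fin n) K, IsUnit M.det →
      MvPolynomial.eval (fun q => M q.1 q.2) p ≠ 0 →
      initialIdeal (Ideal.map (genLin M) I) = J

/-- The set `G(J)` of (exponent vectors of) minimal monomial generators of a monomial
ideal `J`. -/
def minimalMonomialGens {σ : Type*} {K : Type*} [Field K] (J : Ideal (MvPolynomial σ K)) :
    Set (σ →₀ ℕ) :=
  {u | MvPolynomial.monomial u (1 : K) ∈ J ∧
    ∀ v : σ →₀ ℕ, v ≤ u → MvPolynomial.monomial v (1 : K) ∈ J → v = u}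

/-- The squarefree operation `Φ` on exponent vectors:
`x_{i_1} x_{i_2} ⋯ x_{i_k} ↦ {i_1, i_2+1, …, i_k+k-1}` (`i_1 ≤ i_2 ≤ ⋯ ≤ i_k`). -/
noncomputable def sqfreeOp {n : ℕ} (u : Fin n →₀ ℕ) : Finset ℕ :=
  (List.zipWith (· + ·)
      ((u.toMultiset.map (fun a : Fin n => (a : ℕ) + 1)).sort (· ≤ ·))
      (List.range (Multiset.card (u.toMultiset)))).toFinset

/-- `Δs` is the symmetric algebraic shifted complex of `Γ`: its Stanley–Reisner ideal is
`Φ(Gin(I_Γ))`, i.e. `Δs` consists of the `F ⊆ [n]` containing no `Φ(u)`, `u ∈ G(Gin(I_Γ))`. -/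
def IsSymmetricShift (K : Type*) [Field K] (n : ℕ) (Γ Δs : Set (Finset ℕ)) : Prop :=
  ∃ J : Ideal (MvPolynomial (Fin n) K), IsGin (srIdeal K n Γ) J ∧
    Δs = {F | F ⊆ Finset.Icc 1 n ∧ ∀ u ∈ minimalMonomialGens J, ¬ sqfreeOp u ⊆ F}

/-- The exponent vector (in `K[x_1,…,x_n]`) of a monomial given as a multiset. -/
noncomputable def multisetToExp (n : ℕ) (u : Multiset ℕ) : Fin n →₀ ℕ :=
  Finsupp.equivFunOnFinite.symm (fun a : Fin n => u.count ((a : ℕ) + 1))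
/-! The exterior algebra `E = ⋀⟨e_1, e_2, …⟩` over `K`, exterior face ideals, the reverse
lexicographic order, initial ideals and exterior algebraic shifting. We realize `E` as the
exterior algebra of the `K`-module `ℕ → K`, with `e_i` the image of `Pi.single i 1`. -/

/-- The exterior algebra `⋀ (ℕ → K)` hosting all the exterior face ideals. -/
abbrev ExtAlg (K : Type*) [Field K] := ExteriorAlgebra K (ℕ → K)

/-- The exterior monomial `e_F = e_{i_1} ∧ ⋯ ∧ e_{i_k}` for `F = {i_1 < ⋯ < i_k}`. -/
noncomputable def eMon (K : Type*) [Field K] (F : Finset ℕ) : ExtAlg K :=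
  ((F.sort (· ≤ ·)).map (fun i => ExteriorAlgebra.ι K (Pi.single i (1 : K)))).prod

/-- The exterior face ideal `J_Γ` of a complex `Γ` on the vertex set `V`, generated by the
monomials `e_F` with `F ⊆ V`, `F ∉ Γ`. -/
noncomputable def extFaceIdeal (K : Type*) [Field K] (V : Finset ℕ) (Γ : Set (Finset ℕ)) :
    Ideal (ExtAlg K) :=
  Ideal.span {x | ∃ F : Finset ℕ, F ⊆ V ∧ F ∉ Γ ∧ x = eMon K F}

/-- The alternating form computing the determinant of the coordinates indexed by `F`. -/
noncomputable def detCoeffAlt (K : Type*) [Field K] (F : Finset ℕ) :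
    (ℕ → K) [⋀^Fin F.card]→ₗ[K] K :=
  (Matrix.detRowAlternating).compLinearMap
    (LinearMap.funLeft K K (fun b : Fin F.card => ((F.orderIsoOfFin rfl b : F) : ℕ)))

/-- The coefficient functional of the basis monomial `e_F`: the linear functional on the
exterior algebra giving the coefficient of `e_F` in the monomial basis expansion. -/
noncomputable def extCoeff (K : Type*) [Field K] (F : Finset ℕ) : ExtAlg K →ₗ[K] K :=
  ExteriorAlgebra.liftAlternating
    (fun i => if h : i = F.card then (detCoeffAlt K F).domDomCongr (finCongr h.symm) else 0)

/-- The reverse lexicographic order (induced by `1 > 2 > ⋯`) on exterior monomials: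
`F < G` iff `|F| < |G|`, or the cardinalities agree and the largest element of the
symmetric difference `F Δ G` belongs to `F`. -/
def RevLexLT (F G : Finset ℕ) : Prop :=
  F.card < G.card ∨ (F.card = G.card ∧
    ∃ k, k ∈ F ∧ k ∉ G ∧ ∀ l, k < l → (l ∈ F ↔ l ∈ G))

/-- The initial ideal of an ideal `I` of the exterior algebra w.r.t. the reverse
lexicographic order: spanned by the leading monomials `e_F` of the elements of `I`. -/
noncomputable def extInitialIdeal (K : Type*) [Field K] (I : Ideal (ExtAlg K)) :
    Ideal (ExtAlg K) :=
  Ideal.span {x | ∃ y ∈ I, ∃ F : Finset ℕ, x = eMon K F ∧ extCoeff K F y ≠ 0 ∧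
    ∀ G : Finset ℕ, extCoeff K G y ≠ 0 → G ≠ F → RevLexLT G F}

/-- The linear change of coordinates of `span{e_i : i ∈ V}` (identity elsewhere)
associated with a `|V| × |V|` matrix `M`. -/
noncomputable def extLinMap (K : Type*) [Field K] (V : Finset ℕ)
    (M : Matrix (Fin V.card) (Fin V.card) K) : (ℕ → K) →ₗ[K] (ℕ → K) where
  toFun v k :=
    if h : k ∈ V then
      ∑ a : Fin V.card,
        M ((V.orderIsoOfFin rfl).symm ⟨k, h⟩) a * v ((V.orderIsoOfFin rfl a : V) : ℕ)
    else v k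
  map_add' x y := by
    funext k
    by_cases h : k ∈ V <;> simp [h, mul_add, Finset.sum_add_distrib]
  map_smul' c x := by
    funext k
    by_cases h : k ∈ V <;> simp [h, Finset.mul_sum, mul_left_comm]

/-- The algebra automorphism of the exterior algebra induced by `extLinMap`. -/
noncomputable def extAlgMap (K : Type*) [Field K] (V : Finset ℕ)
    (M : Matrix (Fin V.card) (Fin V.card) K) : ExtAlg K →ₐ[K] ExtAlg K :=
  ExteriorAlgebra.lift K ⟨(ExteriorAlgebra.ι K).comp (extLinMap K V M),
    fun _ => ExteriorAlgebra.ι_sq_zero _⟩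

/-- `Δe` is the exterior algebraic shifted complex of `Γ` (as complexes on the vertex set
`V`): `J_{Δe} = Gin(J_Γ)`, where the generic initial ideal is witnessed by a nonempty
Zariski open subset of `GL(V)` (the nonvanishing locus of a nonzero polynomial in the
matrix entries). -/
def IsExteriorShift (K : Type*) [Field K] (V : Finset ℕ) (Γ Δe : Set (Finset ℕ)) : Prop :=
  ∃ p : MvPolynomial (Fin V.card × Fin V.card) K, p ≠ 0 ∧
    ∀ M : Matrix (Fin V.card) (Fin V.card) K, IsUnit M.det →
      MvPolynomial.eval (fun q => M q.1 q.2) p ≠ 0 →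
      extInitialIdeal K (Ideal.map (extAlgMap K V M) (extFaceIdeal K V Γ)) =
        extFaceIdeal K V Δe

/-- The simplicial complex on `V` whose exterior face ideal is the (monomial) ideal `J`. -/
noncomputable def complexOfExtIdeal (K : Type*) [Field K] (V : Finset ℕ)
    (J : Ideal (ExtAlg K)) : Set (Finset ℕ) :=
  {F | F ⊆ V ∧ eMon K F ∉ J}

/-- Nongeneric exterior shifting `Δ_φ(Γ)`, defined by `J_{Δ_φ(Γ)} = in(φ(J_Γ))` for an
individual linear change of coordinates `φ` given by the matrix `M`. -/
noncomputable def DeltaPhi (K : Type*) [Field K] (V : Finset ℕ)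
    (M : Matrix (Fin V.card) (Fin V.card) K) (Γ : Set (Finset ℕ)) : Set (Finset ℕ) :=
  complexOfExtIdeal K V (extInitialIdeal K (Ideal.map (extAlgMap K V M) (extFaceIdeal K V Γ)))

/-- The shifting-theoretic upper bound relation for a `(d-1)`-dimensional complex `Γ` on the
vertex set `V`: `Δᵉ(Γ) ⊆ Δ(V,d)`. -/
def ShiftingUBR (K : Type*) [Field K] (V : Finset ℕ) (d : ℕ) (Γ : Set (Finset ℕ)) : Prop :=
  ∀ Δe, IsExteriorShift K V Γ Δe → Δe ⊆ DeltaV V d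
/-! Graded pieces, linear systems of parameters, the Cohen–Macaulay property and the strong
Lefschetz property for graded quotients `A = K[x_1,…,x_n]/I`. -/

/-- The degree-`k` homogeneous component of the graded quotient `S/I` (the image of the
degree-`k` homogeneous polynomials). -/
noncomputable def quotPiece {K : Type*} [Field K] {n : ℕ}
    (I : Ideal (MvPolynomial (Fin n) K)) (k : ℕ) :
    Submodule K (MvPolynomial (Fin n) K ⧸ I) :=
  (MvPolynomial.homogeneousSubmodule (Fin n) K k).map (Ideal.Quotient.mkₐ K I).toLinearMap

/-- `θ_1, …, θ_d` is a linear system of parameters of `S/I`: the `θ_a` are linear forms and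
the quotient `S/(I + (θ_1,…,θ_d))` has Krull dimension `≤ 0`. -/
def IsLSOP {K : Type*} [Field K] {n : ℕ} (I : Ideal (MvPolynomial (Fin n) K)) (d : ℕ)
    (θ : Fin d → MvPolynomial (Fin n) K) : Prop :=
  (∀ a, (θ a).IsHomogeneous 1) ∧
    ringKrullDim (MvPolynomial (Fin n) K ⧸ (I ⊔ Ideal.span (Set.range θ))) ≤ 0

set_option synthInstance.maxHeartbeats 1000000 in
/-- The graded quotient `A = S/I` is Cohen–Macaulay: a linear system of parameters of
length `d = dim A` forms a regular `A`-sequence. -/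
def IsCMIdeal {K : Type*} [Field K] {n : ℕ} (I : Ideal (MvPolynomial (Fin n) K)) : Prop :=
  ∃ d : ℕ, ringKrullDim (MvPolynomial (Fin n) K ⧸ I) = d ∧
    ∃ θ : Fin d → MvPolynomial (Fin n) K, IsLSOP I d θ ∧
      RingTheory.Sequence.IsRegular (MvPolynomial (Fin n) K ⧸ I)
        ((List.ofFn θ).map (⇑(Ideal.Quotient.mk I)))

/-- The graded quotient `A = S/I` has the strong Lefschetz property: `A` is Cohen–Macaulay
and there are an l.s.o.p. `θ_1, …, θ_d` (`d = dim A`) and a linear form `ω` such that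
`ω^{s-2i} : (A/θA)_i → (A/θA)_{s-i}` is bijective for `0 ≤ i ≤ s/2`, where
`s = max{k : (A/θA)_k ≠ 0}`. -/
def HasSLPIdeal {K : Type*} [Field K] {n : ℕ} (I : Ideal (MvPolynomial (Fin n) K)) : Prop :=
  IsCMIdeal I ∧
    ∃ d : ℕ, ringKrullDim (MvPolynomial (Fin n) K ⧸ I) = d ∧
      ∃ θ : Fin d → MvPolynomial (Fin n) K, IsLSOP I d θ ∧
        ∃ ω : MvPolynomial (Fin n) K, ω.IsHomogeneous 1 ∧
          ∃ s : ℕ,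
            (quotPiece (I ⊔ Ideal.span (Set.range θ)) s ≠ ⊥ ∧
              ∀ k, s < k → quotPiece (I ⊔ Ideal.span (Set.range θ)) k = ⊥) ∧
            ∀ i : ℕ, 2 * i ≤ s →
              Set.BijOn
                (fun x => (Ideal.Quotient.mk (I ⊔ Ideal.span (Set.range θ)) ω) ^ (s - 2 * i) * x)
                (quotPiece (I ⊔ Ideal.span (Set.range θ)) i)
                (quotPiece (I ⊔ Ideal.span (Set.range θ)) (s - i))

/-- A simplicial complex is Cohen–Macaulay over `K` if its Stanley–Reisner ring is. -/
def ComplexCM (K : Type*) [Field K] (n : ℕ) (Γ : Set (Finset ℕ)) : Prop :=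
  IsCMIdeal (srIdeal K n Γ)

/-- A `(d-1)`-dimensional complex `Γ` has the strong Lefschetz property if `h_d(Γ) > 0` and
its Stanley–Reisner ring has the strong Lefschetz property. -/
def ComplexSLP (K : Type*) [Field K] (n d : ℕ) (Γ : Set (Finset ℕ)) : Prop :=
  0 < hvec d Γ d ∧ HasSLPIdeal (srIdeal K n Γ)

/-- A `1`-dimensional simplicial sphere (a cycle): a complex all of whose faces are edges or
smaller, every vertex lying in exactly two edges, whose edge graph is connected. -/
def IsCycleComplex (V : Finset ℕ) (Γ : Set (Finset ℕ)) : Prop :=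
  SimplicialComplexOn V Γ ∧ (∀ F ∈ Γ, F.card ≤ 2) ∧
    (∀ v ∈ V, {e | e ∈ Γ ∧ e.card = 2 ∧ v ∈ e}.ncard = 2) ∧
    ∀ u ∈ V, ∀ v ∈ V,
      Relation.ReflTransGen (fun a b : ℕ => ({a, b} : Finset ℕ) ∈ Γ) u v

/-! Under the Link condition, a face `F ∋ i` is either moved by `C_{ij}` into the contraction
or kept, and then `F ∪ {j} ∈ Γ`; so `Shift_{ij}(Γ)` is the contraction together with the faces
`H ∋ i` with `H ∪ {j} ∈ Γ`, which is exactly `{i} * ({j} * lk_Γ({i,j}))`. Conversely a face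
`G ∪ {i}` with `G ∪ {j} ∈ Γ` is fixed by `C_{ij}`, so this description of the shift forces the
Link condition. The minimal generators of `I_Γ` are the `x_F` for the minimal nonfaces `F`, and
a minimal nonface containing `i` and `j` is exactly a failure of the Link condition. -/

section LinkCondition

variable {Γ : Set (Finset ℕ)} {i j : ℕ}

theorem linkCondition_iff_forall_insert :
    LinkCondition Γ i j ↔ ∀ G : Finset ℕ, i ∉ G → j ∉ G →
      (insert i G ∈ Γ ∧ insert j G ∈ Γ ↔ insert i (insert j G) ∈ Γ) := by
  have hpair : ∀ G : Finset ℕ, G ∪ {i, j} = insert i (insert j G) := fun G => by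
    ext; simp only [Finset.mem_union, Finset.mem_insert, Finset.mem_singleton]; tauto
  simp only [LinkCondition, linkOf, Set.ext_iff, Set.mem_inter_iff, Set.mem_ofPred_eq,
    Finset.disjoint_singleton_right, Finset.disjoint_insert_right, Finset.union_singleton,
    hpair]
  exact forall_congr' fun G => by tauto

theorem linkCondition_iff_of_isLowerSet (hΓ : IsLowerSet Γ) :
    LinkCondition Γ i j ↔ ∀ G : Finset ℕ, i ∉ G → j ∉ G →
      insert i G ∈ Γ → insert j G ∈ Γ → insert i (insert j G) ∈ Γ := by
  rw [linkCondition_iff_forall_insert]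
  refine forall_congr' fun G => forall₂_congr fun _ _ => ⟨fun h hi hj => h.1 ⟨hi, hj⟩,
    fun h => ⟨fun hij => h hij.1 hij.2, fun hij => ⟨hΓ ?_ hij, hΓ ?_ hij⟩⟩⟩
  · exact Finset.insert_subset_insert _ (Finset.subset_insert _ _)
  · exact Finset.insert_comm i j G ▸ Finset.insert_subset_insert _ (Finset.subset_insert _ _)

theorem linkCondition_iff_forall_minimal_notMem {V : Finset ℕ} (hΓ : IsLowerSet Γ)
    (hΓV : ∀ F ∈ Γ, F ⊆ V) (hi : i ∈ V) (hj : j ∈ V) (hij : i ≠ j) :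
    LinkCondition Γ i j ↔ ∀ F ⊆ V, Minimal (· ∉ Γ) F → i ∈ F → j ∉ F := by
  rw [linkCondition_iff_of_isLowerSet hΓ]
  constructor
  · intro hlc F _ hF hiF hjF
    have hsub : ∀ k ∈ F, F.erase k ∈ Γ := fun k hk =>
      by_contra fun h => (minimal_iff_forall_lt.1 hF).2 (Finset.erase_ssubset hk) h
    refine hF.1 ?_
    have := hlc ((F.erase i).erase j) (by simp) (by simp) ?_ ?_
    · rwa [Finset.insert_erase (Finset.mem_erase.2 ⟨hij.symm, hjF⟩), Finset.insert_erase hiF]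
        at this
    · rw [Finset.erase_right_comm, Finset.insert_erase (Finset.mem_erase.2 ⟨hij, hiF⟩)]
      exact hsub j hjF
    · rw [Finset.insert_erase (Finset.mem_erase.2 ⟨hij.symm, hjF⟩)]
      exact hsub i hiF
  · intro h G hiG hjG hGi hGj
    by_contra hG
    obtain ⟨F, hFG, hF⟩ := exists_minimal_le_of_wellFoundedLT (· ∉ Γ) _ hG
    have hGV : G ⊆ V := (Finset.subset_insert _ _).trans (hΓV _ hGi)
    have hiF : i ∈ F := by
      by_contra hiF
      exact hF.1 (hΓ ((Finset.subset_insert_iff_of_notMem hiF).1 hFG) hGj)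
    have hjF : j ∈ F := by
      by_contra hjF
      refine hF.1 (hΓ ?_ hGi)
      rwa [Finset.insert_comm, Finset.subset_insert_iff_of_notMem hjF] at hFG
    refine h F (hFG.trans ?_) hF hiF hjF
    exact Finset.insert_subset hi (Finset.insert_subset hj hGV)

end LinkCondition

section Shift

variable {Γ : Set (Finset ℕ)} {i j : ℕ}

theorem setOf_insert_joinW_linkOf :
    {H | ∃ F ∈ joinW {j} (linkOf Γ {i, j}), H = insert i F} = {H | i ∈ H ∧ insert j H ∈ Γ} := by
  ext H
  simp only [joinW, linkOf, Set.mem_ofPred_eq]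
  constructor
  · rintro ⟨_, ⟨W, hW, G, ⟨-, hG⟩, rfl⟩, rfl⟩
    refine ⟨Finset.mem_insert_self _ _, ?_⟩
    convert hG using 1
    rcases Finset.subset_singleton_iff.1 hW with rfl | rfl <;>
      · ext
        grind
  · rintro ⟨hiH, hjH⟩
    refine ⟨{j} ∩ H ∪ (H.erase i).erase j,
      ⟨{j} ∩ H, Finset.inter_subset_left, (H.erase i).erase j, ⟨by simp, ?_⟩, rfl⟩, ?_⟩
    · convert hjH using 1
      ext
      grind
    · ext
      grind

theorem notMem_contraction_of_mem {H : Finset ℕ} (hiH : i ∈ H) (hij : i ≠ j) :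
    H ∉ contraction Γ i j := by
  rintro (⟨-, hiH'⟩ | ⟨F, -, -, rfl⟩)
  · exact hiH' hiH
  · simp [hij] at hiH

theorem contraction_union_subset_shiftComplex (hΓ : IsLowerSet Γ) (hij : i ≠ j) :
    contraction Γ i j ∪ {H | i ∈ H ∧ insert j H ∈ Γ} ⊆ shiftComplex Γ i j := by
  rintro H ((⟨hH, hiH⟩ | ⟨F, hF, hiF, rfl⟩) | ⟨hiH, hjH⟩)
  · exact ⟨H, hH, by simp [shiftMap, hiH]⟩
  · by_cases hjF : j ∈ F
    · have hF' : F.erase i ∪ {j} = F.erase i := by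
        rw [Finset.union_singleton, Finset.insert_eq_of_mem (Finset.mem_erase.2 ⟨hij.symm, hjF⟩)]
      rw [hF']
      exact ⟨F.erase i, hΓ (Finset.erase_subset _ _) hF, by simp [shiftMap]⟩
    by_cases hmem : F.erase i ∪ {j} ∈ Γ
    · exact ⟨_, hmem, by simp [shiftMap, hij]⟩
    · rw [Finset.union_singleton] at hmem ⊢
      exact ⟨F, hF, by simp [shiftMap, hiF, hjF, hmem]⟩
  · refine ⟨H, hΓ (Finset.subset_insert _ _) hjH, ?_⟩
    have : insert j (H.erase i) ∈ Γ :=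
      hΓ (Finset.insert_subset_insert _ (Finset.erase_subset _ _)) hjH
    simp [shiftMap, this]

theorem shiftComplex_subset_contraction_union (hlc : LinkCondition Γ i j) :
    shiftComplex Γ i j ⊆ contraction Γ i j ∪ {H | i ∈ H ∧ insert j H ∈ Γ} := by
  rintro _ ⟨F, hF, rfl⟩
  unfold shiftMap
  split_ifs with hmove
  · exact Or.inl (Or.inr ⟨F, hF, hmove.1, rfl⟩)
  by_cases hiF : i ∈ F
  · refine Or.inr ⟨hiF, ?_⟩
    by_cases hjF : j ∈ F
    · rwa [Finset.insert_eq_of_mem hjF]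
    have hstay : insert j (F.erase i) ∈ Γ := by
      rw [← Finset.union_singleton]; tauto
    have := ((linkCondition_iff_forall_insert.1 hlc) (F.erase i) (by simp)
      (by simp [hjF])).1 ⟨by rwa [Finset.insert_erase hiF], hstay⟩
    rwa [Finset.insert_comm, Finset.insert_erase hiF] at this
  · exact Or.inl (Or.inl ⟨hF, hiF⟩)

theorem linkCondition_of_shiftComplex_eq (hΓ : IsLowerSet Γ) (hij : i ≠ j)
    (h : shiftComplex Γ i j = contraction Γ i j ∪ {H | i ∈ H ∧ insert j H ∈ Γ}) :
    LinkCondition Γ i j := by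
  rw [linkCondition_iff_of_isLowerSet hΓ]
  intro G hiG _ hGi hGj
  have hfix : insert i G ∈ shiftComplex Γ i j :=
    ⟨_, hGi, by simp [shiftMap, Finset.erase_insert hiG, hGj]⟩
  rw [h] at hfix
  rcases hfix with hc | ⟨-, hjiG⟩
  · exact absurd hc (notMem_contraction_of_mem (Finset.mem_insert_self _ _) hij)
  · rw [Finset.insert_comm]
    exact hjiG

theorem linkCondition_contraction_union (hΓ : IsLowerSet Γ) (hij : i ≠ j) :
    LinkCondition (contraction Γ i j ∪ {H | i ∈ H ∧ insert j H ∈ Γ}) i j := by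
  have hmem : ∀ H, i ∈ H → (H ∈ contraction Γ i j ∪ {H | i ∈ H ∧ insert j H ∈ Γ} ↔
      insert j H ∈ Γ) := fun H hiH => by
    simp [notMem_contraction_of_mem hiH hij, hiH]
  rw [linkCondition_iff_forall_insert]
  intro G hiG hjG
  rw [hmem _ (Finset.mem_insert_self _ _), hmem _ (Finset.mem_insert_self _ _),
    Finset.insert_comm j i, Finset.insert_eq_of_mem (by simp : j ∈ insert i (insert j G))]
  refine ⟨fun h => h.1, fun h => ⟨h, Or.inl (Or.inl ⟨hΓ (Finset.subset_insert _ _) h, ?_⟩)⟩⟩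
  simp [hij, hiG]

end Shift

section StanleyReisner

noncomputable def faceExponent (n : ℕ) (F : Finset ℕ) : Fin n →₀ ℕ :=
  ∑ a ∈ Finset.univ.filter (fun a : Fin n => (a : ℕ) + 1 ∈ F), Finsupp.single a 1

variable {n : ℕ}

theorem faceExponent_apply (F : Finset ℕ) (a : Fin n) :
    faceExponent n F a = if (a : ℕ) + 1 ∈ F then 1 else 0 := by
  simp [faceExponent, Finsupp.finsetSum_apply, Finsupp.single_apply]

theorem faceMonomial_eq_monomial (K : Type*) [CommRing K] (F : Finset ℕ) :
    faceMonomial K n F = MvPolynomial.monomial (faceExponent n F) 1 := by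
  rw [faceExponent, MvPolynomial.monomial_sum_one]
  rfl

theorem faceExponent_pos_iff {F : Finset ℕ} {a : Fin n} :
    0 < faceExponent n F a ↔ (a : ℕ) + 1 ∈ F := by
  rw [faceExponent_apply]
  split_ifs <;> simp [*]

theorem faceExponent_le_iff {F : Finset ℕ} {u : Fin n →₀ ℕ} :
    faceExponent n F ≤ u ↔ ∀ a : Fin n, (a : ℕ) + 1 ∈ F → 0 < u a := by
  simp only [Finsupp.le_def, faceExponent_apply]
  refine forall_congr' fun a => ?_
  split_ifs <;> simp [*, Nat.one_le_iff_ne_zero, Nat.pos_iff_ne_zero]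

theorem faceExponent_le_faceExponent_iff {F F' : Finset ℕ} (hF : F ⊆ Finset.Icc 1 n) :
    faceExponent n F ≤ faceExponent n F' ↔ F ⊆ F' := by
  simp only [faceExponent_le_iff, faceExponent_pos_iff]
  refine ⟨fun h k hk => ?_, fun h a ha => h ha⟩
  obtain ⟨hk1, hkn⟩ := Finset.mem_Icc.1 (hF hk)
  have := h ⟨k - 1, by omega⟩ (by simpa [Nat.sub_add_cancel hk1] using hk)
  simpa [Nat.sub_add_cancel hk1] using this

theorem monomial_mem_srIdeal_iff (K : Type*) [Field K] (Γ : Set (Finset ℕ)) (u : Fin n →₀ ℕ) :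
    MvPolynomial.monomial u (1 : K) ∈ srIdeal K n Γ ↔
      ∃ F ⊆ Finset.Icc 1 n, F ∉ Γ ∧ faceExponent n F ≤ u := by
  have hgens : {f | ∃ F : Finset ℕ, F ⊆ Finset.Icc 1 n ∧ F ∉ Γ ∧ f = faceMonomial K n F} =
      (fun e => MvPolynomial.monomial e (1 : K)) ''
        ((faceExponent n) '' {F | F ⊆ Finset.Icc 1 n ∧ F ∉ Γ}) := by
    ext f
    simp [faceMonomial_eq_monomial, and_assoc, eq_comm]
  classical
  rw [srIdeal, hgens, MvPolynomial.mem_ideal_span_monomial_image,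
    MvPolynomial.support_monomial, if_neg one_ne_zero]
  simp [and_assoc]

theorem mem_minimalMonomialGens_srIdeal_iff (K : Type*) [Field K] (Γ : Set (Finset ℕ))
    (u : Fin n →₀ ℕ) :
    u ∈ minimalMonomialGens (srIdeal K n Γ) ↔
      ∃ F ⊆ Finset.Icc 1 n, Minimal (· ∉ Γ) F ∧ faceExponent n F = u := by
  simp only [minimalMonomialGens, Set.mem_ofPred_eq, monomial_mem_srIdeal_iff]
  constructor
  · rintro ⟨⟨F, hFV, hF, hFu⟩, hmin⟩
    have hu : faceExponent n F = u := hmin _ hFu ⟨F, hFV, hF, le_rfl⟩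
    refine ⟨F, hFV, minimal_iff_forall_lt.2 ⟨hF, fun G hGF hG => ?_⟩, hu⟩
    have hGV : G ⊆ Finset.Icc 1 n := hGF.le.trans hFV
    have hGu : faceExponent n G = u :=
      hmin _ (((faceExponent_le_faceExponent_iff hGV).2 hGF.le).trans hFu) ⟨G, hGV, hG, le_rfl⟩
    exact hGF.not_ge ((faceExponent_le_faceExponent_iff hFV).1 (by rw [hu, hGu]))
  · rintro ⟨F, hFV, hF, rfl⟩
    refine ⟨⟨F, hFV, hF.1, le_rfl⟩, fun v hv ⟨G, hGV, hG, hGv⟩ => le_antisymm hv ?_⟩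
    rwa [hF.eq_of_le hG ((faceExponent_le_faceExponent_iff hGV).1 (hGv.trans hv))] at hGv

theorem forall_minimalMonomialGens_srIdeal_iff (K : Type*) [Field K] (Γ : Set (Finset ℕ))
    (a b : Fin n) :
    (∀ u ∈ minimalMonomialGens (srIdeal K n Γ), ¬ (0 < u a ∧ 0 < u b)) ↔
      ∀ F ⊆ Finset.Icc 1 n, Minimal (· ∉ Γ) F → (a : ℕ) + 1 ∈ F → (b : ℕ) + 1 ∉ F := by
  simp only [mem_minimalMonomialGens_srIdeal_iff]
  constructor
  · intro h F hFV hF ha hb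
    exact h _ ⟨F, hFV, hF, rfl⟩ ⟨faceExponent_pos_iff.2 ha, faceExponent_pos_iff.2 hb⟩
  · rintro h _ ⟨F, hFV, hF, rfl⟩ ⟨ha, hb⟩
    exact h F hFV hF (faceExponent_pos_iff.1 ha) (faceExponent_pos_iff.1 hb)

end StanleyReisner

/-- Lemma 2.1. For a complex `Γ` on `[n]` and `1 ≤ i < j ≤ n`, the
following are equivalent: (i) the Link condition w.r.t. `{i,j}`;
(ii) `Shift_{ij}(Γ) = C_Γ(ij) ∪ { {i} ∪ F : F ∈ {j} * lk_Γ({i,j}) }`;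
(iii) `I_Γ` has no minimal monomial generator divisible by `x_i x_j`.
In particular, the Link condition w.r.t. `{i,j}` passes to `Shift_{ij}(Γ)`. -/
theorem stmt2 (K : Type) [Field K] (n i j : ℕ) (hi : 1 ≤ i) (hij : i < j) (hj : j ≤ n)
    (Γ : Set (Finset ℕ)) (hΓ : SimplicialComplexOn (Finset.Icc 1 n) Γ) :
    (LinkCondition Γ i j ↔
      shiftComplex Γ i j =
        contraction Γ i j ∪
          {H | ∃ F ∈ joinW {j} (linkOf Γ {i, j}), H = insert i F}) ∧
    (LinkCondition Γ i j ↔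
      ∀ u ∈ minimalMonomialGens (srIdeal K n Γ),
        ¬ (0 < u ⟨i - 1, by omega⟩ ∧ 0 < u ⟨j - 1, by omega⟩)) ∧
    (LinkCondition Γ i j → LinkCondition (shiftComplex Γ i j) i j) := by
  have hlower : IsLowerSet Γ := fun F G hGF hF => hΓ.2.2 F hF G hGF
  have hshift (hlc : LinkCondition Γ i j) :
      shiftComplex Γ i j = contraction Γ i j ∪ {H | i ∈ H ∧ insert j H ∈ Γ} :=
    (shiftComplex_subset_contraction_union hlc).antisymm
      (contraction_union_subset_shiftComplex hlower hij.ne)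
  have hgens := forall_minimalMonomialGens_srIdeal_iff K Γ (n := n)
    ⟨i - 1, by omega⟩ ⟨j - 1, by omega⟩
  simp only [Nat.sub_add_cancel hi, Nat.sub_add_cancel (hi.trans hij.le)] at hgens
  rw [setOf_insert_joinW_linkOf, hgens]
  refine ⟨⟨hshift, linkCondition_of_shiftComplex_eq hlower hij.ne⟩, ?_,
    fun hlc => hshift hlc ▸ linkCondition_contraction_union hlower hij.ne⟩
  exact linkCondition_iff_forall_minimal_notMem hlower hΓ.1
    (Finset.mem_Icc.2 ⟨hi, by omega⟩) (Finset.mem_Icc.2 ⟨by omega, hj⟩) hij.ne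
end

section
/- Let Γ be a (d−1)-dimensional strongly edge decomposable simplicial complex. Then h_i(Γ) = h_{d−i}(Γ) for i = 0,1,…,d, and h_0(Γ) ≤ h_1(Γ) ≤ ⋯ ≤ h_{⌊d/2⌋}(Γ). -/
/-! The proof works with the `h`-polynomial `∑ᵢ hᵢ tⁱ = ∑_{F ∈ Γ} t^|F| (1 - t)^(d - |F|)`.
For the boundary of a `d`-simplex it is `1 + t + ⋯ + t^d`. For an edge `{i, j}` satisfying
the Link condition, the faces through `i` that the contraction merges with other faces are
exactly `G ∪ {i}` and `G ∪ {i, j}` with `G ∈ lk {i, j}`, whence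
`h_Γ = h_{C(ij)} + t · h_{lk {i, j}}` (the link taken with `d - 2`). Adding `t · r` to `q`
keeps the coefficients symmetric and increasing up to the middle when `r` has these
properties for `d - 2` and `r₀ ≥ 0`, so the claim follows by induction along the
decomposition. The contraction keeps dimension `d - 1` because a strongly edge decomposable
complex is never a cone. -/

open Polynomial Finset

section

variable {R : Type*} [CommRing R]

lemma coeff_one_sub_X_pow (n k : ℕ) :
    ((1 - X : R[X]) ^ n).coeff k = (-1) ^ k * n.choose k := by
  have h : (1 - X : R[X]) ^ n = C ((-1) ^ n) * (X + C (-1)) ^ n := by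
    rw [C_pow, ← mul_pow]; congr 1; simp; ring
  rw [h, coeff_C_mul, coeff_X_add_C_pow]
  rcases le_or_gt k n with hk | hk
  · obtain ⟨m, rfl⟩ := Nat.exists_eq_add_of_le hk
    rw [Nat.add_sub_cancel_left, pow_add, mul_assoc, ← mul_assoc ((-1) ^ m), ← pow_add,
      ← two_mul, pow_mul, neg_one_sq, one_pow, one_mul]
  · simp [Nat.choose_eq_zero_of_lt hk]

lemma coeff_X_pow_mul_one_sub_X_pow {d i j : ℕ} (hi : i ≤ d) :
    ((X : R[X]) ^ j * (1 - X) ^ (d - j)).coeff i =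
      if j ≤ i then (-1) ^ (i - j) * ((d - j).choose (d - i) : R) else 0 := by
  rw [coeff_X_pow_mul']
  split_ifs with hji
  · rw [coeff_one_sub_X_pow, Nat.choose_symm_of_eq_add]; omega
  · rfl

lemma X_pow_mul_one_sub_X_pow_add {d k : ℕ} (hk : k + 2 ≤ d) :
    (X : R[X]) ^ (k + 1) * (1 - X) ^ (d - (k + 1)) + X ^ (k + 2) * (1 - X) ^ (d - (k + 2)) =
      X * (X ^ k * (1 - X) ^ (d - 2 - k)) := by
  obtain ⟨m, rfl⟩ := Nat.exists_eq_add_of_le hk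
  rw [show k + 2 + m - (k + 1) = m + 1 by omega, show k + 2 + m - (k + 2) = m by omega,
    show k + 2 + m - 2 - k = m by omega]
  ring

lemma sum_choose_succ_mul_X_pow_mul_one_sub_X_pow [IsDomain R] (d : ℕ) :
    ∑ j ∈ range (d + 1), ((d + 1).choose j : R[X]) * (X ^ j * (1 - X) ^ (d - j)) =
      ∑ k ∈ range (d + 1), X ^ k := by
  have hne : (1 - X : R[X]) ≠ 0 := fun h => by simpa [coeff_one] using congrArg (coeff · 1) h
  refine mul_left_cancel₀ hne ?_
  rw [mul_neg_geom_sum, mul_sum]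
  have hbinom := (add_pow (X : R[X]) (1 - X) (d + 1)).symm
  rw [add_sub_cancel, one_pow, sum_range_succ, Nat.sub_self, pow_zero, Nat.choose_self,
    Nat.cast_one, mul_one, mul_one, ← eq_sub_iff_add_eq] at hbinom
  rw [← hbinom]
  refine sum_congr rfl fun j hj => ?_
  rw [show d + 1 - j = d - j + 1 by have := mem_range.1 hj; omega, pow_succ]
  ring

end

structure SymmUnimodal (d : ℕ) (p : ℤ[X]) : Prop where
  natDegree_le : p.natDegree ≤ d
  coeff_symm : ∀ i ≤ d, p.coeff i = p.coeff (d - i)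
  coeff_mono : ∀ i < d / 2, p.coeff i ≤ p.coeff (i + 1)

lemma symmUnimodal_geom_sum (d : ℕ) : SymmUnimodal d (∑ k ∈ range (d + 1), X ^ k) := by
  have hcoeff (i : ℕ) :
      (∑ k ∈ range (d + 1), (X : ℤ[X]) ^ k).coeff i = if i ≤ d then 1 else 0 := by
    simp [coeff_X_pow]
  refine ⟨?_, fun i hi => ?_, fun i hi => ?_⟩
  · exact natDegree_sum_le_of_forall_le _ _ fun k hk => by
      simpa [Nat.lt_succ_iff] using hk
  · simp [hcoeff, hi]
  · rw [hcoeff, hcoeff, if_pos (by omega), if_pos (by omega)]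

lemma SymmUnimodal.add_X_mul {d : ℕ} {q r : ℤ[X]} (hq : SymmUnimodal d q)
    (hr : SymmUnimodal (d - 2) r) (hr₀ : 0 ≤ r.coeff 0) (hd : 2 ≤ d) :
    SymmUnimodal d (q + X * r) := by
  have hcoeff₀ : (q + X * r).coeff 0 = q.coeff 0 := by simp
  have hcoeff : ∀ i, (q + X * r).coeff (i + 1) = q.coeff (i + 1) + r.coeff i := by simp
  have hrtop : r.coeff (d - 1) = 0 := coeff_eq_zero_of_natDegree_lt (by have := hr.1; omega)
  have hend : (q + X * r).coeff d = q.coeff 0 := by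
    have h := hcoeff (d - 1)
    rw [Nat.sub_add_cancel (by omega), hrtop, add_zero] at h
    rw [h, hq.2 0 (Nat.zero_le d), Nat.sub_zero]
  refine ⟨?_, fun i hi => ?_, fun i hi => ?_⟩
  · refine natDegree_add_le_of_degree_le hq.1 (natDegree_mul_le.trans ?_)
    have := hr.1
    rw [natDegree_X]; omega
  · rcases i with _ | i
    · rw [hcoeff₀, Nat.sub_zero, hend]
    rcases eq_or_lt_of_le hi with hid | hid
    · rw [hid, Nat.sub_self, hcoeff₀, hend]
    · obtain ⟨m, hm⟩ : ∃ m, d - (i + 1) = m + 1 := ⟨d - i - 2, by omega⟩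
      rw [hm, hcoeff, hcoeff, ← hm, hq.2 (i + 1) hi, hr.2 i (by omega)]
      congr 2; omega
  · rcases i with _ | i
    · rw [hcoeff₀, hcoeff]
      linarith [hq.3 0 hi]
    · rw [hcoeff, hcoeff]
      linarith [hq.3 _ hi, hr.3 i (by omega)]

/-- The `h`-polynomial of `Γ` as a `(d - 1)`-dimensional complex (junk `0` if `Γ` is infinite). -/
noncomputable def hPoly (d : ℕ) (Γ : Set (Finset ℕ)) : ℤ[X] :=
  ∑ᶠ F ∈ Γ, X ^ F.card * (1 - X) ^ (d - F.card)

lemma hPoly_eq_sum_fvec {d : ℕ} {Γ : Set (Finset ℕ)} (hfin : Γ.Finite)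
    (hd : ∀ F ∈ Γ, F.card ≤ d) :
    hPoly d Γ = ∑ j ∈ range (d + 1), (fvec Γ j : ℤ[X]) * (X ^ j * (1 - X) ^ (d - j)) := by
  classical
  rw [hPoly, finsum_mem_eq_finite_toFinset_sum _ hfin,
    ← sum_fiberwise_of_maps_to (g := Finset.card) (t := range (d + 1))
      fun F hF => mem_range_succ_iff.2 (hd F (hfin.mem_toFinset.1 hF))]
  refine sum_congr rfl fun j _ => ?_
  have hfvec : fvec Γ j = (hfin.toFinset.filter (·.card = j)).card := by
    rw [fvec, ← Set.ncard_coe_finset]; congr 1; ext; simp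
  rw [sum_congr rfl fun F hF => by rw [(mem_filter.1 hF).2], sum_const, hfvec, nsmul_eq_mul]

lemma hvec_eq_coeff_hPoly {d i : ℕ} {Γ : Set (Finset ℕ)} (hfin : Γ.Finite)
    (hd : ∀ F ∈ Γ, F.card ≤ d) (hi : i ≤ d) : hvec d Γ i = (hPoly d Γ).coeff i := by
  simp only [hPoly_eq_sum_fvec hfin hd, finsetSum_coeff, coeff_natCast_mul,
    coeff_X_pow_mul_one_sub_X_pow hi, mul_ite, mul_zero]
  rw [← sum_filter, hvec]
  have hrange : (range (d + 1)).filter (· ≤ i) = range (i + 1) := by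
    ext j; simp only [mem_filter, mem_range]; omega
  rw [hrange]
  exact sum_congr rfl fun j _ => by ring

lemma coeff_zero_hPoly_nonneg {d : ℕ} {Γ : Set (Finset ℕ)} (hfin : Γ.Finite)
    (hd : ∀ F ∈ Γ, F.card ≤ d) : 0 ≤ (hPoly d Γ).coeff 0 := by
  rw [← hvec_eq_coeff_hPoly hfin hd (Nat.zero_le d)]
  simp [hvec]

lemma fvec_simplexBoundary (V : Finset ℕ) {k : ℕ} (hk : k < V.card) :
    fvec {F | F ⊆ V ∧ F ≠ V} k = V.card.choose k := by
  rw [fvec, ← card_powersetCard, ← Set.ncard_coe_finset]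
  congr 1
  ext F
  rw [mem_coe, mem_powersetCard]
  constructor
  · rintro ⟨⟨hFV, -⟩, rfl⟩
    exact ⟨hFV, rfl⟩
  · rintro ⟨hFV, rfl⟩
    exact ⟨⟨hFV, by rintro rfl; omega⟩, rfl⟩

lemma hPoly_simplexBoundary {V : Finset ℕ} {d : ℕ} (hV : V.card = d + 1) :
    hPoly d {F | F ⊆ V ∧ F ≠ V} = ∑ k ∈ range (d + 1), X ^ k := by
  have hfin : {F | F ⊆ V ∧ F ≠ V}.Finite :=
    V.powerset.finite_toSet.subset fun F hF => mem_powerset.2 hF.1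
  have hd : ∀ F ∈ {F | F ⊆ V ∧ F ≠ V}, F.card ≤ d := fun F hF => by
    have := card_lt_card (Finset.ssubset_iff_subset_ne.2 hF); omega
  rw [hPoly_eq_sum_fvec hfin hd, ← sum_choose_succ_mul_X_pow_mul_one_sub_X_pow, ← hV]
  refine sum_congr rfl fun j hj => ?_
  rw [fvec_simplexBoundary V (by have := mem_range.1 hj; omega)]

lemma card_eq_of_isGreatest_simplexBoundary {V : Finset ℕ} {d : ℕ} (hV : V.Nonempty)
    (hd : IsGreatest (card '' {F | F ⊆ V ∧ F ≠ V}) d) : V.card = d + 1 := by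
  obtain ⟨v, hv⟩ := hV
  obtain ⟨F, hF, rfl⟩ := hd.1
  have hlt := card_lt_card (Finset.ssubset_iff_subset_ne.2 hF)
  have hle := hd.2 ⟨V.erase v, ⟨erase_subset v V, (erase_ssubset hv).ne⟩, rfl⟩
  rw [card_erase_of_mem hv] at hle
  omega

section Faces

variable {Γ : Set (Finset ℕ)} {d : ℕ}

lemma isGreatest_card_of_sdim (hfin : Γ.Finite) (hne : Γ.Nonempty) (h : sdim Γ = d - 1) :
    IsGreatest (card '' Γ) d := by
  have hfin' := hfin.image fun F : Finset ℕ => (F.card : ℤ) - 1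
  rw [sdim] at h
  refine ⟨?_, ?_⟩
  · obtain ⟨F, hF, hFd⟩ := (hne.image _).csSup_mem hfin'
    beta_reduce at hFd
    exact ⟨F, hF, by omega⟩
  · rintro _ ⟨F, hF, rfl⟩
    have := le_csSup hfin'.bddAbove ⟨F, hF, rfl⟩
    beta_reduce at this
    omega

lemma exists_superset_card_eq (hfin : Γ.Finite) (hpure : PureComplex Γ)
    (hd : IsGreatest (card '' Γ) d) {F : Finset ℕ} (hF : F ∈ Γ) :
    ∃ G ∈ Γ, F ⊆ G ∧ G.card = d := by
  obtain ⟨G, hFG, hG⟩ := hfin.exists_le_maximal hF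
  obtain ⟨G₀, hG₀, hG₀d⟩ := hd.1
  have hG₀facet : IsFacet Γ G₀ := ⟨hG₀, fun H hH hG₀H =>
    eq_of_subset_of_card_le hG₀H (hG₀d ▸ hd.2 ⟨H, hH, rfl⟩)⟩
  have hGfacet : IsFacet Γ G := ⟨hG.1, fun H hH hGH => le_antisymm hGH (hG.2 hH hGH)⟩
  exact ⟨G, hG.1, hFG, (hpure G G₀ hGfacet hG₀facet).trans hG₀d⟩

lemma isGreatest_card_linkOf (hfin : Γ.Finite) (hpure : PureComplex Γ)
    (hd : IsGreatest (card '' Γ) d) {E : Finset ℕ} (hE : E ∈ Γ) :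
    IsGreatest (card '' linkOf Γ E) (d - E.card) := by
  refine ⟨?_, ?_⟩
  · obtain ⟨G, hG, hEG, hGd⟩ := exists_superset_card_eq hfin hpure hd hE
    exact ⟨G \ E, ⟨sdiff_disjoint, by rwa [sdiff_union_of_subset hEG]⟩,
      by rw [card_sdiff_of_subset hEG, hGd]⟩
  · rintro _ ⟨G, ⟨hdisj, hG⟩, rfl⟩
    have := hd.2 ⟨_, hG, rfl⟩
    rw [card_union_of_disjoint hdisj] at this
    omega

lemma isLowerSet_linkOf (hΓ : IsLowerSet Γ) (E : Finset ℕ) : IsLowerSet (linkOf Γ E) :=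
  fun _ _ hGH ⟨hdisj, hH⟩ => ⟨hdisj.mono_left hGH, hΓ (union_subset_union_left hGH) hH⟩

lemma linkOf_finite (hfin : Γ.Finite) (E : Finset ℕ) : (linkOf Γ E).Finite :=
  (hfin.image (· \ E)).subset fun G ⟨hdisj, hG⟩ =>
    ⟨G ∪ E, hG, show (G ∪ E) \ E = G by rw [union_sdiff_right, hdisj.sdiff_eq_left]⟩

end Faces

def IsCone (Γ : Set (Finset ℕ)) (v : ℕ) : Prop := ∀ F ∈ Γ, insert v F ∈ Γ

/-- The faces through `i` that the contraction of `{i, j}` merges with faces avoiding `i`. -/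
def absorbedFaces (Γ : Set (Finset ℕ)) (i j : ℕ) : Set (Finset ℕ) :=
  {F | i ∈ F ∧ (j ∈ F ∨ F.erase i ∪ {j} ∈ Γ)}

section Contraction

variable {Γ : Set (Finset ℕ)} {i j d : ℕ}

lemma card_erase_union_singleton {F : Finset ℕ} (hiF : i ∈ F) (hjF : j ∉ F) :
    (F.erase i ∪ {j}).card = F.card := by
  rw [union_comm, ← insert_eq, card_insert_of_notMem (fun h => hjF (mem_of_mem_erase h)),
    card_erase_add_one hiF]

lemma insert_erase_erase_union_singleton {F : Finset ℕ} (hiF : i ∈ F)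
    (hjF : j ∉ F) : insert i ((F.erase i ∪ {j}).erase j) = F := by
  rw [union_comm, ← insert_eq, erase_insert (fun h => hjF (mem_of_mem_erase h)),
    insert_erase hiF]

lemma isLowerSet_contraction (hΓ : IsLowerSet Γ) (hij : i ≠ j) :
    IsLowerSet (contraction Γ i j) := by
  rintro H G hGH (⟨hH, hiH⟩ | ⟨F, hF, hiF, rfl⟩)
  · exact Or.inl ⟨hΓ hGH hH, fun hiG => hiH (hGH hiG)⟩
  have hiG : i ∉ G := fun h => by simpa [hij] using hGH h
  by_cases hjG : j ∈ G
  · refine Or.inr ⟨insert i (G.erase j), hΓ ?_ hF, mem_insert_self _ _, ?_⟩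
    · refine insert_subset hiF fun x hx => ?_
      have := hGH (mem_of_mem_erase hx)
      simp only [mem_union, mem_erase, mem_singleton] at this
      exact this.elim And.right fun h => absurd h (ne_of_mem_erase hx)
    · rw [erase_insert (by simp [hiG]), union_comm, ← insert_eq, insert_erase hjG]
  · refine Or.inl ⟨hΓ (fun x hx => ?_) hF, hiG⟩
    have := hGH hx
    simp only [mem_union, mem_erase, mem_singleton] at this
    exact this.elim And.right fun h => absurd (h ▸ hx) hjG

lemma contraction_eq_image (hΓ : IsLowerSet Γ) (hij : i ≠ j) :
    contraction Γ i j = (fun F => if i ∈ F then F.erase i ∪ {j} else F) ''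
      (Γ \ absorbedFaces Γ i j) := by
  ext G
  constructor
  · rintro (⟨hG, hiG⟩ | ⟨F, hF, hiF, rfl⟩)
    · exact ⟨G, ⟨hG, fun h => hiG h.1⟩, if_neg hiG⟩
    by_cases hF' : j ∈ F ∨ F.erase i ∪ {j} ∈ Γ
    · have hσF : F.erase i ∪ {j} ∈ Γ := by
        refine hF'.elim (fun hjF => hΓ (fun x hx => ?_) hF) id
        simp only [mem_union, mem_erase, mem_singleton] at hx
        exact hx.elim And.right (· ▸ hjF)
      have hiσF : i ∉ F.erase i ∪ {j} := by simp [hij]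
      exact ⟨_, ⟨hσF, fun h => hiσF h.1⟩, if_neg hiσF⟩
    · exact ⟨F, ⟨hF, fun h => hF' h.2⟩, if_pos hiF⟩
  · rintro ⟨F, ⟨hF, hFt⟩, rfl⟩
    by_cases hiF : i ∈ F
    · simp only [if_pos hiF]
      exact Or.inr ⟨F, hF, hiF, rfl⟩
    · simp only [if_neg hiF]
      exact Or.inl ⟨hF, hiF⟩

lemma contraction_finite (hΓ : IsLowerSet Γ) (hij : i ≠ j) (hfin : Γ.Finite) :
    (contraction Γ i j).Finite :=
  contraction_eq_image hΓ hij ▸ (hfin.subset Set.sdiff_subset).image _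

lemma isGreatest_card_contraction (hΓ : IsLowerSet Γ) (hfin : Γ.Finite) (hpure : PureComplex Γ)
    (hd : IsGreatest (card '' Γ) d) (hcone : ¬ IsCone Γ j) :
    IsGreatest (card '' contraction Γ i j) d := by
  refine ⟨?_, ?_⟩
  · by_contra hnot
    refine hcone fun F hF => ?_
    obtain ⟨G, hG, hFG, hGd⟩ := exists_superset_card_eq hfin hpure hd hF
    have hjG : j ∈ G := by
      by_contra hjG
      by_cases hiG : i ∈ G
      · exact hnot ⟨_, Or.inr ⟨G, hG, hiG, rfl⟩,
          (card_erase_union_singleton hiG hjG).trans hGd⟩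
      · exact hnot ⟨G, Or.inl ⟨hG, hiG⟩, hGd⟩
    exact hΓ (insert_subset hjG hFG) hG
  · rintro _ ⟨G, hG | ⟨F, hF, hiF, rfl⟩, rfl⟩
    · exact hd.2 ⟨G, hG.1, rfl⟩
    · calc (F.erase i ∪ {j}).card ≤ (F.erase i).card + 1 := card_union_le _ _
        _ = F.card := card_erase_add_one hiF
        _ ≤ d := hd.2 ⟨F, hF, rfl⟩

lemma injOn_contractionMap :
    Set.InjOn (fun F => if i ∈ F then F.erase i ∪ {j} else F)
      (Γ \ absorbedFaces Γ i j) := by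
  rintro F ⟨hF, hFt⟩ F' ⟨hF', hF't⟩ h
  simp only [absorbedFaces, Set.mem_ofPred_eq, not_and, not_or] at hFt hF't
  by_cases hiF : i ∈ F <;> by_cases hiF' : i ∈ F' <;>
    simp only [hiF, hiF', if_true, if_false] at h
  · rw [← insert_erase_erase_union_singleton hiF (hFt hiF).1, h,
      insert_erase_erase_union_singleton hiF' (hF't hiF').1]
  · exact absurd (h ▸ hF') (hFt hiF).2
  · exact absurd (h ▸ hF) (hF't hiF').2
  · exact h

lemma hPoly_sdiff_absorbedFaces (hΓ : IsLowerSet Γ) (hij : i ≠ j) :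
    hPoly d (Γ \ absorbedFaces Γ i j) = hPoly d (contraction Γ i j) := by
  rw [hPoly, hPoly, contraction_eq_image hΓ hij, finsum_mem_image injOn_contractionMap]
  refine finsum_mem_congr rfl fun F ⟨_, hFt⟩ => ?_
  simp only [absorbedFaces, Set.mem_ofPred_eq, not_and, not_or] at hFt
  split_ifs with hiF
  · rw [card_erase_union_singleton hiF (hFt hiF).1]
  · rfl

lemma inter_eq_image_linkOf (hΓ : IsLowerSet Γ) (hlc : LinkCondition Γ i j) :
    Γ ∩ absorbedFaces Γ i j =
      insert i '' linkOf Γ {i, j} ∪ (· ∪ {i, j}) '' linkOf Γ {i, j} := by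
  ext F
  constructor
  · rintro ⟨hF, hiF, hF'⟩
    by_cases hjF : j ∈ F
    · have hsub : ({i, j} : Finset ℕ) ⊆ F := insert_subset hiF (singleton_subset_iff.2 hjF)
      exact Or.inr ⟨F \ {i, j}, ⟨sdiff_disjoint, by rwa [sdiff_union_of_subset hsub]⟩,
        sdiff_union_of_subset hsub⟩
    · have hlk : F.erase i ∈ linkOf Γ {i} ∩ linkOf Γ {j} :=
        ⟨⟨by simp, by rwa [union_comm, ← insert_eq, insert_erase hiF]⟩,
          ⟨by simpa using fun h => hjF (mem_of_mem_erase h), hF'.resolve_left hjF⟩⟩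
      exact Or.inl ⟨F.erase i, hlc ▸ hlk, insert_erase hiF⟩
  · rintro (⟨G, ⟨hdisj, hG⟩, rfl⟩ | ⟨G, ⟨hdisj, hG⟩, rfl⟩)
    · have hiG : i ∉ G := (disjoint_insert_right.1 hdisj).1
      refine ⟨hΓ ?_ hG, mem_insert_self _ _, Or.inr (hΓ ?_ hG)⟩
      · exact insert_subset (by simp) subset_union_left
      · rw [erase_insert hiG]; exact union_subset_union_right (by simp)
    · exact ⟨hG, by simp, Or.inl (by simp)⟩

lemma hPoly_inter_absorbedFaces (hΓ : IsLowerSet Γ) (hfin : Γ.Finite) (hij : i ≠ j)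
    (hlc : LinkCondition Γ i j) (hd : ∀ F ∈ Γ, F.card ≤ d) :
    hPoly d (Γ ∩ absorbedFaces Γ i j) = X * hPoly (d - 2) (linkOf Γ {i, j}) := by
  have hL := linkOf_finite hfin {i, j}
  have hpair : ({i, j} : Finset ℕ).card = 2 := card_pair hij
  rw [hPoly, hPoly, inter_eq_image_linkOf hΓ hlc,
    finsum_mem_union ?disj (hL.image _) (hL.image _), finsum_mem_image ?inj₁,
    finsum_mem_image ?inj₂, ← finsum_mem_add_distrib hL, mul_finsum_mem' _ _ hL]
  · refine finsum_mem_congr rfl fun G ⟨hdisj, hG⟩ => ?_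
    have hiG : i ∉ G := (disjoint_insert_right.1 hdisj).1
    have hcard := hd _ hG
    rw [card_union_of_disjoint hdisj, hpair] at hcard
    rw [card_insert_of_notMem hiG, card_union_of_disjoint hdisj, hpair,
      X_pow_mul_one_sub_X_pow_add hcard]
  case disj =>
    refine Set.disjoint_left.2 ?_
    rintro _ ⟨G, ⟨hdisj, -⟩, rfl⟩ ⟨G', -, hG'⟩
    have : j ∈ insert i G := hG' ▸ mem_union_right _ (by simp)
    exact disjoint_left.1 hdisj ((mem_insert.1 this).resolve_left hij.symm) (by simp)
  case inj₁ =>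
    rintro G ⟨hdisj, -⟩ G' ⟨hdisj', -⟩ h
    rw [← erase_insert (disjoint_insert_right.1 hdisj).1,
      ← erase_insert (disjoint_insert_right.1 hdisj').1, h]
  case inj₂ =>
    rintro G ⟨hdisj, -⟩ G' ⟨hdisj', -⟩ h
    have h' := congrArg (· \ {i, j}) h
    simpa only [union_sdiff_right, hdisj.sdiff_eq_left, hdisj'.sdiff_eq_left] using h'

lemma hPoly_eq_hPoly_contraction_add (hΓ : IsLowerSet Γ) (hfin : Γ.Finite) (hij : i ≠ j)
    (hlc : LinkCondition Γ i j) (hd : ∀ F ∈ Γ, F.card ≤ d) :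
    hPoly d Γ = hPoly d (contraction Γ i j) + X * hPoly (d - 2) (linkOf Γ {i, j}) := by
  rw [← hPoly_inter_absorbedFaces hΓ hfin hij hlc hd, ← hPoly_sdiff_absorbedFaces hΓ hij,
    hPoly, hPoly, hPoly, add_comm, finsum_mem_inter_add_sdiff _ hfin]

end Contraction

namespace StronglyEdgeDecomposable

lemma empty_mem {Γ : Set (Finset ℕ)} (h : StronglyEdgeDecomposable Γ) : ∅ ∈ Γ := by
  induction h with
  | trivialComplex => rfl
  | simplexBoundary V hV => exact ⟨empty_subset V, hV.ne_empty.symm⟩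
  | contract Γ i j _ _ _ _ _ _ ihc =>
    obtain ⟨h, -⟩ | ⟨F, -, -, hF⟩ := ihc
    · exact h
    · simpa using congrArg (j ∈ ·) hF

lemma not_isCone {Γ : Set (Finset ℕ)} (h : StronglyEdgeDecomposable Γ) (v : ℕ) :
    ¬ IsCone Γ v := by
  induction h generalizing v with
  | trivialComplex => exact fun hc => singleton_ne_empty v (hc ∅ rfl)
  | simplexBoundary V hV =>
    intro hc
    by_cases hvV : v ∈ V
    · exact (hc _ ⟨erase_subset v V, (erase_ssubset hvV).ne⟩).2 (insert_erase hvV)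
    · exact hvV ((hc ∅ ⟨empty_subset V, hV.ne_empty.symm⟩).1 (mem_insert_self v ∅))
  | contract Γ i j hij _ _ _ _ _ ihc ihl =>
    intro hc
    by_cases hv : v = i ∨ v = j
    · refine ihc j fun G hG => ?_
      rcases hG with ⟨hG, hiG⟩ | ⟨F, hF, hiF, rfl⟩
      · rcases hv with rfl | rfl
        · refine Or.inr ⟨insert v G, hc G hG, mem_insert_self _ _, ?_⟩
          rw [erase_insert hiG, union_comm, ← insert_eq]
        · exact Or.inl ⟨hc G hG, by simp [hij.ne, hiG]⟩
      · rw [insert_eq_of_mem (by simp)]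
        exact Or.inr ⟨F, hF, hiF, rfl⟩
    · rw [not_or] at hv
      refine ihl v fun G ⟨hdisj, hG⟩ => ⟨?_, ?_⟩
      · exact disjoint_insert_left.2 ⟨by simp [hv.1, hv.2], hdisj⟩
      · rw [insert_union]; exact hc _ hG

theorem symmUnimodal_hPoly {Γ : Set (Finset ℕ)}
    (hsed : StronglyEdgeDecomposable Γ) {d : ℕ} (hΓ : IsLowerSet Γ) (hfin : Γ.Finite)
    (hd : IsGreatest (card '' Γ) d) : SymmUnimodal d (hPoly d Γ) := by
  induction hsed generalizing d with
  | trivialComplex =>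
    obtain ⟨_, rfl, rfl⟩ := hd.1
    simpa [hPoly] using symmUnimodal_geom_sum 0
  | simplexBoundary V hV =>
    rw [hPoly_simplexBoundary (card_eq_of_isGreatest_simplexBoundary hV hd)]
    exact symmUnimodal_geom_sum d
  | contract Γ i j hij hpure hedge hlc hcon hlk ihc ihl =>
    have hbound : ∀ F ∈ Γ, F.card ≤ d := fun F hF => hd.2 ⟨F, hF, rfl⟩
    have hd2 : 2 ≤ d := card_pair hij.ne ▸ hbound _ hedge
    have hL := card_pair hij.ne ▸ isGreatest_card_linkOf hfin hpure hd hedge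
    have hC := isGreatest_card_contraction (i := i) hΓ hfin hpure hd
      ((StronglyEdgeDecomposable.contract Γ i j hij hpure hedge hlc hcon hlk).not_isCone j)
    have hLfin := linkOf_finite hfin {i, j}
    rw [hPoly_eq_hPoly_contraction_add hΓ hfin hij.ne hlc hbound]
    refine SymmUnimodal.add_X_mul ?_ (ihl (isLowerSet_linkOf hΓ _) hLfin hL)
      (coeff_zero_hPoly_nonneg hLfin fun G hG => hL.2 ⟨G, hG, rfl⟩) hd2
    exact ihc (isLowerSet_contraction hΓ hij.ne) (contraction_finite hΓ hij.ne hfin) hC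

end StronglyEdgeDecomposable

/-- Lemma 2.4, Nevo. The `h`-vector of a `(d-1)`-dimensional strongly edge
decomposable complex satisfies `h_i = h_{d-i}` for `i = 0,…,d` and
`h_0 ≤ h_1 ≤ ⋯ ≤ h_{⌊d/2⌋}`. -/
theorem stmt6 (n d : ℕ) (Γ : Set (Finset ℕ))
    (hΓ : SimplicialComplexOn (Finset.Icc 1 n) Γ)
    (hdim : sdim Γ = (d : ℤ) - 1)
    (hsed : StronglyEdgeDecomposable Γ) :
    (∀ i ≤ d, hvec d Γ i = hvec d Γ (d - i)) ∧
    (∀ i : ℕ, i < d / 2 → hvec d Γ i ≤ hvec d Γ (i + 1)) := by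
  have hlow : IsLowerSet Γ := fun F G hGF hF => hΓ.2.2 F hF G hGF
  have hfin : Γ.Finite :=
    (Finset.Icc 1 n).powerset.finite_toSet.subset fun F hF => mem_powerset.2 (hΓ.1 F hF)
  have hd := isGreatest_card_of_sdim hfin ⟨∅, hsed.empty_mem⟩ hdim
  have hh : ∀ i ≤ d, hvec d Γ i = (hPoly d Γ).coeff i :=
    fun i => hvec_eq_coeff_hPoly hfin fun F hF => hd.2 ⟨F, hF, rfl⟩
  obtain ⟨-, hsymm, hmono⟩ := hsed.symmUnimodal_hPoly hlow hfin hd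
  refine ⟨fun i hi => ?_, fun i hi => ?_⟩
  · rw [hh i hi, hh (d - i) (Nat.sub_le d i)]
    exact hsymm i hi
  · rw [hh i (by omega), hh (i + 1) (by omega)]
    exact hmono i hi
end

section
/- Let n > d ≥ 0 be integers. Then Δ([2,n],d) ⊆ Δ(n,d), and {1, n+1} * Δ([2,n],d) ⊆ Δ(n+1, d+2). -/
/-! Relabelling `[2,n]` order-isomorphically onto `[n-1]` is the shift `i ↦ i + 1`, and shifting
an admissible `d`-subset of `[n-1]` up by one gives an admissible `d`-subset of `[n]`. Adding the
vertices `1` and `n+1` to an admissible `d`-subset of `[n]` avoiding `1` gives an admissible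
`(d+2)`-subset of `[n+1]`: its gap `n+1-k` (`k ≥ 1`) is the old gap `n-(k-1)`, and the interval
it must force is the old one. -/

open Finset

theorem vlabel_Icc {a b i : ℕ} (hi : 1 ≤ i) (hib : i ≤ b + 1 - a) :
    vlabel (Icc a b) i = a + (i - 1) := by
  have hcard : (Icc a b).card = b + 1 - a := Nat.card_Icc a b
  have h : i - 1 < (Icc a b).card := by omega
  have hshift : (fun x : Fin (Icc a b).card => a + (x : ℕ)) = ⇑((Icc a b).orderEmbOfFin rfl) :=
    orderEmbOfFin_unique rfl (fun x => mem_Icc.2 (by have := x.2; omega))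
      fun x y hxy => by simpa using hxy
  rw [vlabel, dif_pos h, coe_orderIsoOfFin_apply, ← hshift]

namespace Admissible

variable {n d : ℕ} {F : Finset ℕ}

theorem empty (n : ℕ) : Admissible n 0 ∅ :=
  ⟨empty_subset _, card_empty, fun _ _ _ => by rw [Icc_eq_empty_of_lt (by omega)]⟩

theorem card_le (hF : Admissible n d F) : d ≤ n := by
  simpa [hF.2.1] using card_le_card hF.1

theorem image_add_one (hF : Admissible n d F) : Admissible (n + 1) d (F.image (· + 1)) := by
  have hdn := hF.card_le
  obtain ⟨hsub, hcard, hgap⟩ := hF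
  refine ⟨fun x hx => ?_, ?_, fun k hk hnot x hx => ?_⟩
  · obtain ⟨a, ha, rfl⟩ := mem_image.1 hx
    have := mem_Icc.1 (hsub ha)
    exact mem_Icc.2 (by omega)
  · rw [card_image_of_injective _ (add_left_injective 1), hcard]
  · rw [mem_Icc] at hx
    obtain ⟨y, rfl⟩ : ∃ y, x = y + 1 := ⟨x - 1, by omega⟩
    have hnF : n - k ∉ F := fun h =>
      hnot (by rw [show n + 1 - k = n - k + 1 by omega]; exact mem_image_of_mem _ h)
    exact mem_image_of_mem _ (hgap k (by omega) hnF (mem_Icc.2 (by omega)))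

theorem insert_one_insert (hF : Admissible n d F) (hn : n ≠ 0) (h1 : 1 ∉ F) :
    Admissible (n + 1) (d + 2) (insert 1 (insert (n + 1) F)) := by
  obtain ⟨hsub, hcard, hgap⟩ := hF
  have hn1 : n + 1 ∉ F := fun h => by have := mem_Icc.1 (hsub h); omega
  refine ⟨?_, ?_, fun k hk hnot => ?_⟩
  · refine insert_subset (mem_Icc.2 (by omega)) (insert_subset (mem_Icc.2 (by omega)) ?_)
    exact hsub.trans (Icc_subset_Icc le_rfl (Nat.le_succ n))
  · rw [card_insert_of_notMem (by simp [h1, hn]), card_insert_of_notMem hn1, hcard]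
  · have hk0 : k ≠ 0 := by
      rintro rfl
      exact hnot (mem_insert_of_mem (mem_insert_self _ _))
    obtain ⟨j, rfl⟩ := Nat.exists_eq_add_one_of_ne_zero hk0
    have hnF : n - j ∉ F := fun h => hnot (by
      rw [show n + 1 - (j + 1) = n - j by omega]
      exact mem_insert_of_mem (mem_insert_of_mem h))
    calc Icc (n + 1 - (d + 2) + (j + 1)) (n + 1 - (j + 1) - 1)
        ⊆ Icc (n - d + j) (n - j - 1) := Icc_subset_Icc (by omega) (by omega)
      _ ⊆ F := hgap j (by omega) hnF
      _ ⊆ insert 1 (insert (n + 1) F) := (subset_insert _ _).trans (subset_insert _ _)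

end Admissible

/-- The special case `d = 0` in `DeltaC` agrees with the generic one: `∅` is the only admissible
`0`-set. -/
theorem mem_deltaC_iff {n d : ℕ} {G : Finset ℕ} :
    G ∈ DeltaC n d ↔ ∃ F, Admissible n d F ∧ G ⊆ F := by
  unfold DeltaC
  split_ifs with hd
  · subst hd
    refine ⟨fun hG => ⟨∅, Admissible.empty n, (Set.mem_singleton_iff.1 hG).le⟩, ?_⟩
    rintro ⟨F, hF, hGF⟩
    exact subset_empty.1 (hGF.trans (card_eq_zero.1 hF.2.1).le)
  · rfl

theorem exists_admissible_of_mem_deltaV_Icc_two {m d : ℕ} {G : Finset ℕ}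
    (hG : G ∈ DeltaV (Icc 2 (m + 1)) d) :
    ∃ F, Admissible m d F ∧ G ⊆ F.image (· + 1) := by
  obtain ⟨G, hG, rfl⟩ := hG
  rw [Nat.card_Icc, show m + 1 + 1 - 2 = m by omega, mem_deltaC_iff] at hG
  obtain ⟨F, hF, hGF⟩ := hG
  refine ⟨F, hF, fun x hx => ?_⟩
  obtain ⟨y, hy, rfl⟩ := mem_image.1 hx
  have := mem_Icc.1 (hF.1 (hGF hy))
  rw [vlabel_Icc this.1 (by omega), show 2 + (y - 1) = y + 1 by omega]
  exact mem_image_of_mem _ (hGF hy)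

/-- Lemma 4.6 / `3no4`. For `n > d ≥ 0`: `Δ([2,n],d) ⊆ Δ(n,d)` and
`{1,n+1} * Δ([2,n],d) ⊆ Δ(n+1,d+2)`. -/
theorem stmt12 (n d : ℕ) (hdn : d < n) :
    DeltaV (Finset.Icc 2 n) d ⊆ DeltaC n d ∧
    joinW {1, n + 1} (DeltaV (Finset.Icc 2 n) d) ⊆ DeltaC (n + 1) (d + 2) := by
  obtain ⟨m, rfl⟩ : ∃ m, n = m + 1 := ⟨n - 1, by omega⟩
  constructor
  · intro G hG
    obtain ⟨F, hF, hGF⟩ := exists_admissible_of_mem_deltaV_Icc_two hG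
    exact mem_deltaC_iff.2 ⟨_, hF.image_add_one, hGF⟩
  · rintro _ ⟨W, hW, G, hG, rfl⟩
    obtain ⟨F, hF, hGF⟩ := exists_admissible_of_mem_deltaV_Icc_two hG
    have h1 : 1 ∉ F.image (· + 1) := fun h => by
      obtain ⟨a, ha, ha1⟩ := mem_image.1 h
      have := mem_Icc.1 (hF.1 ha)
      omega
    refine mem_deltaC_iff.2
      ⟨_, hF.image_add_one.insert_one_insert m.succ_ne_zero h1, union_subset ?_ ?_⟩
    · exact hW.trans (insert_subset_insert 1 (singleton_subset_iff.2 (mem_insert_self _ _)))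
    · exact hGF.trans ((subset_insert _ _).trans (subset_insert _ _))
end
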